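/- arXiv:2510.00322 — 8 statements merged into one kernel-verified Lean document; each statement's English description precedes it below -/
import Mathlib

section
/- For all integers n, m, t with n ≥ m ≥ t ≥ 1, the minimum size of a covering design satisfies the inductive inequality C(n,m,t) ≥ ⌈(n/m) · C(n−1,m−1,t−1)⌉, where C(n,m,0) is defined to equal 1. -/
/-- An `(n,m,t)`-covering design of size `k`. -/
def IsCoveringDesign (n m t k : ℕ) (S : Fin k → Finset (Fin n)) : Prop :=
  (∀ i, (S i).card = m) ∧ ∀ T : Finset (Fin n), T.card ≤ t → ∃ i, T ⊆ S i

/-- `C(n,m,t)`: the minimum size of an `(n,m,t)`-covering design.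
(For `t = 0` and `m ≤ n` this equals `1`.) -/
noncomputable def coveringNumber (n m t : ℕ) : ℕ :=
  sInf {k : ℕ | ∃ S : Fin k → Finset (Fin n), IsCoveringDesign n m t k S}

/-!
Fix a minimum `(n,m,t)`-covering design. For each point `x`, the blocks through
`x`, with `x` removed, form an `(n-1,m-1,t-1)`-covering design: a `(t-1)`-set `T` is covered by
the block covering `T ∪ {x}`. Hence every point lies in at least `C(n-1,m-1,t-1)` blocks, and
counting incidences gives `n · C(n-1,m-1,t-1) ≤ m · C(n,m,t)`.
-/

open Finset

variable {n m t : ℕ}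

theorem IsCoveringDesign.of_fintype {ι : Type*} [Fintype ι] {S : ι → Finset (Fin n)}
    (hcard : ∀ i, #(S i) = m) (hcover : ∀ T : Finset (Fin n), #T ≤ t → ∃ i, T ⊆ S i) :
    IsCoveringDesign n m t (Fintype.card ι) (S ∘ (Fintype.equivFin ι).symm) := by
  refine ⟨fun i => hcard _, fun T hT => ?_⟩
  obtain ⟨i, hi⟩ := hcover T hT
  exact ⟨Fintype.equivFin ι i, by simpa using hi⟩

theorem coveringNumber_le_card {ι : Type*} [Fintype ι] {S : ι → Finset (Fin n)}
    (hcard : ∀ i, #(S i) = m) (hcover : ∀ T : Finset (Fin n), #T ≤ t → ∃ i, T ⊆ S i) :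
    coveringNumber n m t ≤ Fintype.card ι :=
  Nat.sInf_le ⟨_, IsCoveringDesign.of_fintype hcard hcover⟩

theorem exists_isCoveringDesign_coveringNumber (htm : t ≤ m) (hmn : m ≤ n) :
    ∃ S, IsCoveringDesign n m t (coveringNumber n m t) S := by
  have hcover : ∀ T : Finset (Fin n), #T ≤ t → ∃ B : powersetCard m univ, T ⊆ B.1 := fun T hT => by
    obtain ⟨B, hTB, hB⟩ := exists_superset_card_eq (hT.trans htm) (by simpa using hmn)
    exact ⟨⟨B, mem_powersetCard_univ.mpr hB⟩, hTB⟩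
  exact Nat.sInf_mem (s := {k | ∃ S : Fin k → Finset (Fin n), IsCoveringDesign n m t k S})
    ⟨_, _, IsCoveringDesign.of_fintype (fun B => mem_powersetCard_univ.mp B.2) hcover⟩

theorem Finset.card_preimage_succAbove {x : Fin (n + 1)} {B : Finset (Fin (n + 1))} (hx : x ∈ B) :
    #(B.preimage x.succAbove x.succAbove_right_injective.injOn) = #B - 1 := by
  classical
  simp [card_preimage, filter_ne', hx]

theorem IsCoveringDesign.coveringNumber_le_card_filter_mem {k : ℕ}
    {S : Fin k → Finset (Fin (n + 1))} (hS : IsCoveringDesign (n + 1) (m + 1) (t + 1) k S)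
    (x : Fin (n + 1)) : coveringNumber n m t ≤ #{i | x ∈ S i} := by
  rw [← Fintype.card_subtype]
  -- `x.succAbove` identifies `Fin n` with the points other than `x`.
  refine coveringNumber_le_card
    (S := fun i : {i // x ∈ S i} => (S i).preimage x.succAbove x.succAbove_right_injective.injOn)
    (fun i => by simp [card_preimage_succAbove i.2, hS.1 i]) fun T hT => ?_
  have hcard : #(insert x (T.map x.succAboveEmb)) ≤ t + 1 :=
    (card_insert_le _ _).trans (by simpa using hT)
  obtain ⟨i, hi⟩ := hS.2 _ hcard
  rw [insert_subset_iff, map_subset_iff_subset_preimage] at hi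
  exact ⟨⟨i, hi.1⟩, hi.2⟩

theorem IsCoveringDesign.succ_mul_coveringNumber_le {k : ℕ}
    {S : Fin k → Finset (Fin (n + 1))} (hS : IsCoveringDesign (n + 1) (m + 1) (t + 1) k S) :
    (n + 1) * coveringNumber n m t ≤ k * (m + 1) := by
  classical
  have hblock : ∀ i ∈ univ, #(univ.bipartiteBelow (fun x i => x ∈ S i) i) ≤ m + 1 :=
    fun i _ => by simp [bipartiteBelow, hS.1 i]
  simpa using card_mul_le_card_mul _ (fun x _ => hS.coveringNumber_le_card_filter_mem x) hblock

/-- The inductive inequality `C(n,m,t) ≥ ⌈(n/m) · C(n−1,m−1,t−1)⌉`. -/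
theorem coveringNumber_inductive_lower_bound (n m t : ℕ)
    (ht : 1 ≤ t) (htm : t ≤ m) (hmn : m ≤ n) :
    ⌈(n : ℝ) / (m : ℝ) * (coveringNumber (n - 1) (m - 1) (t - 1) : ℝ)⌉ ≤
      (coveringNumber n m t : ℤ) := by
  obtain ⟨n, rfl⟩ : ∃ n', n = n' + 1 := ⟨n - 1, by omega⟩
  obtain ⟨m, rfl⟩ : ∃ m', m = m' + 1 := ⟨m - 1, by omega⟩
  obtain ⟨t, rfl⟩ : ∃ t', t = t' + 1 := ⟨t - 1, by omega⟩
  obtain ⟨S, hS⟩ := exists_isCoveringDesign_coveringNumber htm hmn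
  have hcount := hS.succ_mul_coveringNumber_le
  rw [Nat.add_sub_cancel, Nat.add_sub_cancel, Nat.add_sub_cancel, Int.ceil_le, Int.cast_natCast,
    div_mul_eq_mul_div, div_le_iff₀ (by positivity)]
  exact_mod_cast hcount
end

section
/- For all integers n, m, t with n ≥ m ≥ t ≥ 1, the minimum size of a covering design satisfies the Erdős–Spencer upper bound C(n,m,t) < (binom(n,t)/binom(m,t)) · (1 + log binom(m,t)) + 1, where log denotes the natural logarithm. -/
/-!
Write `N = C(n,t)` and `b = C(m,t)`. Every `t`-set lies in the same number `C(n-t,m-t)` of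
`m`-sets, so by double counting some `m`-set covers at least a fraction `b/N` of any family of
`t`-sets. Choosing such sets greedily, `j = ⌈(N/b) log b⌉` of them leave at most
`N (1 - b/N)^j ≤ N e^{-jb/N} ≤ N/b` of the `t`-sets uncovered, and each of those is covered by one
more `m`-set of its own.
-/

open Finset

namespace CoveringDesign

section Greedy

variable {α : Type*} [Fintype α] [DecidableEq α] {t m : ℕ}

def uncovered (t : ℕ) (𝒢 : Finset (Finset α)) : Finset (Finset α) :=
  {T ∈ powersetCard t univ | ∀ A ∈ 𝒢, ¬T ⊆ A}

lemma mem_uncovered {𝒢 : Finset (Finset α)} {T : Finset α} :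
    T ∈ uncovered t 𝒢 ↔ #T = t ∧ ∀ A ∈ 𝒢, ¬T ⊆ A := by
  simp [uncovered]

lemma uncovered_empty : uncovered t (∅ : Finset (Finset α)) = powersetCard t univ := by
  ext T
  simp [uncovered]

lemma uncovered_insert (A : Finset α) (𝒢 : Finset (Finset α)) :
    uncovered t (insert A 𝒢) = {T ∈ uncovered t 𝒢 | ¬T ⊆ A} := by
  ext T
  simp only [mem_uncovered, mem_filter, forall_mem_insert]
  tauto

lemma exists_card_eq_mul_choose_le_card_filter_subset (u : Finset (Finset α))
    (hu : ∀ T ∈ u, #T = t) (htm : t ≤ m) (hm : m ≤ Fintype.card α) :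
    ∃ A : Finset α, #A = m ∧
      #u * m.choose t ≤ #{T ∈ u | T ⊆ A} * (Fintype.card α).choose t := by
  have hdouble : ∑ A ∈ powersetCard m univ, #{T ∈ u | T ⊆ A}
      = #u * (Fintype.card α - t).choose (m - t) := by
    calc ∑ A ∈ powersetCard m univ, #{T ∈ u | T ⊆ A}
        = ∑ T ∈ u, #{A ∈ powersetCard m univ | T ⊆ A} := by
          simp only [card_filter]
          exact sum_comm
      _ = ∑ T ∈ u, (Fintype.card α - t).choose (m - t) := sum_congr rfl fun T hT => by
          rw [card_filter_powersetCard_subset T univ m (subset_univ T) (hu T hT ▸ htm),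
            card_univ, hu T hT]
      _ = #u * (Fintype.card α - t).choose (m - t) := by rw [sum_const, smul_eq_mul]
  have hne : (powersetCard m (univ : Finset α)).Nonempty := powersetCard_nonempty.2 (by simpa)
  obtain ⟨A, hA, hcover⟩ := exists_le_of_sum_le hne
    (f := fun _ => #u * m.choose t) (g := fun A => #{T ∈ u | T ⊆ A} * (Fintype.card α).choose t)
    (Eq.le <| by
      rw [sum_const, ← sum_mul, hdouble, card_powersetCard, card_univ, smul_eq_mul,
        mul_left_comm, Nat.choose_mul htm]
      ring)
  exact ⟨A, mem_powersetCard_univ.1 hA, hcover⟩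

lemma exists_card_le_card_uncovered_le (htm : t ≤ m) (hm : m ≤ Fintype.card α) (j : ℕ) :
    ∃ 𝒢 : Finset (Finset α), #𝒢 ≤ j ∧ (∀ A ∈ 𝒢, #A = m) ∧
      (#(uncovered t 𝒢) : ℝ) ≤ (Fintype.card α).choose t *
        (1 - m.choose t / (Fintype.card α).choose t) ^ j := by
  set N := (Fintype.card α).choose t
  have hN : (0 : ℝ) < N := by exact_mod_cast Nat.choose_pos (htm.trans hm)
  have hbN : (m.choose t : ℝ) / N ≤ 1 :=
    (div_le_one hN).2 (by exact_mod_cast Nat.choose_le_choose t hm)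
  induction j with
  | zero => exact ⟨∅, by simp, by simp, by simp [uncovered_empty, N]⟩
  | succ j ih =>
    obtain ⟨𝒢, h𝒢j, h𝒢m, h𝒢u⟩ := ih
    set u := uncovered t 𝒢
    obtain ⟨A, hAm, hA⟩ := exists_card_eq_mul_choose_le_card_filter_subset u
      (fun T hT => (mem_uncovered.1 hT).1) htm hm
    have hsplit : (#{T ∈ u | ¬T ⊆ A} : ℝ) = #u - #{T ∈ u | T ⊆ A} := by
      rw [eq_sub_iff_add_eq, add_comm]
      exact_mod_cast card_filter_add_card_filter_not (s := u) (p := (· ⊆ A))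
    have hA' : (#u : ℝ) * (m.choose t / N) ≤ #{T ∈ u | T ⊆ A} := by
      rw [← mul_div_assoc, div_le_iff₀ hN]
      exact_mod_cast hA
    refine ⟨insert A 𝒢, (card_insert_le A 𝒢).trans (by lia),
      (forall_mem_insert _ _ _).2 ⟨hAm, h𝒢m⟩, ?_⟩
    calc (#(uncovered t (insert A 𝒢)) : ℝ)
        = #{T ∈ u | ¬T ⊆ A} := by rw [uncovered_insert]
      _ ≤ #u * (1 - m.choose t / N) := by rw [hsplit, mul_one_sub]; linarith
      _ ≤ N * (1 - m.choose t / N) ^ j * (1 - m.choose t / N) :=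
        mul_le_mul_of_nonneg_right h𝒢u (sub_nonneg.2 hbN)
      _ = N * (1 - m.choose t / N) ^ (j + 1) := by ring

end Greedy

lemma one_sub_pow_le_inv {p x : ℝ} (hp : p ≤ 1) (hx : 0 < x) {j : ℕ}
    (hj : Real.log x ≤ j * p) : (1 - p) ^ j ≤ x⁻¹ :=
  calc (1 - p) ^ j ≤ Real.exp (-p) ^ j :=
        pow_le_pow_left₀ (sub_nonneg.2 hp) (Real.one_sub_le_exp_neg p) j
    _ = Real.exp (-(j * p)) := by rw [← Real.exp_nat_mul, mul_neg]
    _ ≤ Real.exp (-Real.log x) := Real.exp_le_exp.2 (neg_le_neg hj)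
    _ = x⁻¹ := by rw [Real.exp_neg, Real.exp_log hx]

lemma coveringNumber_le_card {n m t : ℕ} (𝒮 : Finset (Finset (Fin n)))
    (h𝒮 : ∀ A ∈ 𝒮, #A = m) (hcover : ∀ T : Finset (Fin n), #T ≤ t → ∃ A ∈ 𝒮, T ⊆ A) :
    coveringNumber n m t ≤ #𝒮 := by
  refine Nat.sInf_le ⟨fun i => 𝒮.equivFin.symm i, fun i => h𝒮 _ (𝒮.equivFin.symm i).2,
    fun T hT => ?_⟩
  obtain ⟨A, hA, hTA⟩ := hcover T hT
  exact ⟨𝒮.equivFin ⟨A, hA⟩, by simpa using hTA⟩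

lemma coveringNumber_le_card_add_card_uncovered {n m t : ℕ} (htm : t ≤ m) (hmn : m ≤ n)
    (𝒢 : Finset (Finset (Fin n))) (h𝒢 : ∀ A ∈ 𝒢, #A = m) :
    coveringNumber n m t ≤ #𝒢 + #(uncovered t 𝒢) := by
  have hextend : ∀ T : Finset (Fin n), #T ≤ m → ∃ A, T ⊆ A ∧ #A = m := fun T hT => by
    obtain ⟨A, hTA, -, hA⟩ := exists_subsuperset_card_eq (subset_univ T) hT (by simpa using hmn)
    exact ⟨A, hTA, hA⟩
  choose! extend hextend using hextend
  refine (coveringNumber_le_card (𝒢 ∪ (uncovered t 𝒢).image extend) ?_ ?_).trans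
    ((card_union_le _ _).trans (Nat.add_le_add_left card_image_le _))
  · simp only [mem_union, mem_image, mem_uncovered]
    rintro _ (hA | ⟨T, ⟨hT, -⟩, rfl⟩)
    exacts [h𝒢 _ hA, (hextend T (hT ▸ htm)).2]
  · intro T hT
    obtain ⟨T', hTT', -, hT'⟩ :=
      exists_subsuperset_card_eq (subset_univ T) hT (by simpa using htm.trans hmn)
    by_cases hcov : ∃ A ∈ 𝒢, T' ⊆ A
    · obtain ⟨A, hA, hT'A⟩ := hcov
      exact ⟨A, mem_union_left _ hA, hTT'.trans hT'A⟩
    · have hT'u : T' ∈ uncovered t 𝒢 := mem_uncovered.2 ⟨hT', by simpa using hcov⟩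
      exact ⟨extend T', mem_union_right _ (mem_image_of_mem _ hT'u),
        hTT'.trans (hextend T' (hT' ▸ htm)).1⟩

end CoveringDesign

open CoveringDesign in
theorem erdos_spencer_upper_bound_general (n m t : ℕ) (htm : t ≤ m) (hmn : m ≤ n) :
    (coveringNumber n m t : ℝ) <
      (n.choose t : ℝ) / (m.choose t : ℝ) * (1 + Real.log (m.choose t)) + 1 := by
  have hb : (0 : ℝ) < m.choose t := by exact_mod_cast Nat.choose_pos htm
  have hN : (0 : ℝ) < n.choose t := by exact_mod_cast Nat.choose_pos (htm.trans hmn)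
  have hbN : (m.choose t : ℝ) ≤ n.choose t := by exact_mod_cast Nat.choose_le_choose t hmn
  have hlogb : 0 ≤ Real.log (m.choose t) :=
    Real.log_nonneg (Nat.one_le_cast.2 (Nat.choose_pos htm))
  set N : ℝ := (n.choose t : ℝ)
  set b : ℝ := (m.choose t : ℝ)
  set j := ⌈N / b * Real.log b⌉₊
  have hj : (j : ℝ) < N / b * Real.log b + 1 := Nat.ceil_lt_add_one (by positivity)
  obtain ⟨𝒢, h𝒢j, h𝒢m, h𝒢u⟩ :=
    exists_card_le_card_uncovered_le (α := Fin n) htm (by simpa using hmn) j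
  simp only [Fintype.card_fin] at h𝒢u
  have hdecay : (1 - b / N) ^ j ≤ b⁻¹ := one_sub_pow_le_inv ((div_le_one hN).2 hbN) hb
    (by
      calc Real.log b = N / b * Real.log b * (b / N) := by field_simp
        _ ≤ j * (b / N) := by gcongr; exact Nat.le_ceil _)
  have hrest : (#(uncovered t 𝒢) : ℝ) ≤ N / b :=
    h𝒢u.trans ((mul_le_mul_of_nonneg_left hdecay hN.le).trans_eq (div_eq_mul_inv N b).symm)
  calc (coveringNumber n m t : ℝ) ≤ #𝒢 + #(uncovered t 𝒢) := by
        exact_mod_cast coveringNumber_le_card_add_card_uncovered htm hmn 𝒢 h𝒢m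
    _ ≤ j + N / b := add_le_add (by exact_mod_cast h𝒢j) hrest
    _ < N / b * (1 + Real.log b) + 1 := by linarith

/-- Erdős–Spencer upper bound:
`C(n,m,t) < (binom(n,t)/binom(m,t)) · (1 + log binom(m,t)) + 1`. -/
theorem erdos_spencer_upper_bound (n m t : ℕ) (ht : 1 ≤ t) (htm : t ≤ m) (hmn : m ≤ n) :
    (coveringNumber n m t : ℝ) <
      (n.choose t : ℝ) / (m.choose t : ℝ) * (1 + Real.log (m.choose t)) + 1 :=
  erdos_spencer_upper_bound_general n m t htm hmn
end

section
/- For all integers n, m, t with n ≥ m ≥ t ≥ 2, the ratio of binomial coefficients satisfies ((2n−t+1)/(2m−t+1))^t ≤ binom(n,t)/binom(m,t) ≤ ((n/m) · ((n−t+1)/(m−t+1)))^{t/2}. -/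
open Finset

/-- Bounds on the ratio of binomial coefficients:
`((2n−t+1)/(2m−t+1))^t ≤ binom(n,t)/binom(m,t) ≤ ((n/m)·((n−t+1)/(m−t+1)))^{t/2}`,
where the exponent `t/2` is a real exponent. -/
theorem choose_ratio_bounds' (n m t : ℕ) (ht : 2 ≤ t) (htm : t ≤ m) (hmn : m ≤ n) :
    ((2 * (n : ℝ) - (t : ℝ) + 1) / (2 * (m : ℝ) - (t : ℝ) + 1)) ^ t ≤
        (n.choose t : ℝ) / (m.choose t : ℝ) ∧
      (n.choose t : ℝ) / (m.choose t : ℝ) ≤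
        ((n : ℝ) / (m : ℝ) * (((n : ℝ) - (t : ℝ) + 1) / ((m : ℝ) - (t : ℝ) + 1)))
          ^ ((t : ℝ) / 2) := by
  have htn : t ≤ n := htm.trans hmn
  have hsm : (t : ℝ) ≤ (m : ℝ) := by exact_mod_cast htm
  have hmnr : (m : ℝ) ≤ (n : ℝ) := by exact_mod_cast hmn
  have hts : (2 : ℝ) ≤ (t : ℝ) := by exact_mod_cast ht
  set f : ℕ → ℝ := fun i => ((n : ℝ) - i) / ((m : ℝ) - i) with hf
  -- each factor is positive with positive denominators for i < t
  have hden : ∀ i ∈ range t, (0 : ℝ) < (m : ℝ) - i := by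
    intro i hi
    have : (i : ℝ) < (t : ℝ) := by exact_mod_cast mem_range.mp hi
    linarith
  have hnum : ∀ i ∈ range t, (0 : ℝ) < (n : ℝ) - i := by
    intro i hi
    have := hden i hi; linarith
  have hfpos : ∀ i ∈ range t, (0 : ℝ) < f i := fun i hi =>
    div_pos (hnum i hi) (hden i hi)
  -- the choose ratio equals the product of f
  have hratio : (n.choose t : ℝ) / (m.choose t : ℝ) = ∏ i ∈ range t, f i := by
    have h1 : ((n.descFactorial t : ℕ) : ℝ) = ∏ i ∈ range t, ((n : ℝ) - i) := by
      rw [Nat.descFactorial_eq_prod_range]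
      push_cast
      refine prod_congr rfl fun i hi => ?_
      have hi' : i ≤ n := le_of_lt (lt_of_lt_of_le (mem_range.mp hi) htn)
      rw [Nat.cast_sub hi']
    have h2 : ((m.descFactorial t : ℕ) : ℝ) = ∏ i ∈ range t, ((m : ℝ) - i) := by
      rw [Nat.descFactorial_eq_prod_range]
      push_cast
      refine prod_congr rfl fun i hi => ?_
      have hi' : i ≤ m := le_of_lt (lt_of_lt_of_le (mem_range.mp hi) htm)
      rw [Nat.cast_sub hi']
    have hd1 : ((n.descFactorial t : ℕ) : ℝ) = (Nat.factorial t : ℝ) * (n.choose t : ℝ) := by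
      exact_mod_cast congrArg (Nat.cast : ℕ → ℝ) (Nat.descFactorial_eq_factorial_mul_choose n t)
    have hd2 : ((m.descFactorial t : ℕ) : ℝ) = (Nat.factorial t : ℝ) * (m.choose t : ℝ) := by
      exact_mod_cast congrArg (Nat.cast : ℕ → ℝ) (Nat.descFactorial_eq_factorial_mul_choose m t)
    have hfact : (0 : ℝ) < (Nat.factorial t : ℝ) := by exact_mod_cast Nat.factorial_pos t
    have hmd : (0 : ℝ) < ∏ i ∈ range t, ((m : ℝ) - i) := prod_pos hden
    rw [prod_div_distrib]
    rw [← h1, ← h2, hd1, hd2, mul_div_mul_left _ _ hfact.ne']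
  have hPpos : 0 < ∏ i ∈ range t, f i := prod_pos hfpos
  -- squared product as a product of pairs
  have hsq : (∏ i ∈ range t, f i) ^ 2 = ∏ i ∈ range t, (f i * f (t - 1 - i)) := by
    rw [prod_mul_distrib, Finset.prod_range_reflect, sq]
  constructor
  · -- lower bound
    set r : ℝ := (2 * (n : ℝ) - (t : ℝ) + 1) / (2 * (m : ℝ) - (t : ℝ) + 1) with hr
    have hdr : (0 : ℝ) < 2 * (m : ℝ) - (t : ℝ) + 1 := by linarith
    have hrpos : 0 < r := div_pos (by linarith) hdr
    have key : ∀ i ∈ range t, r ^ 2 ≤ f i * f (t - 1 - i) := by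
      intro i hi
      have hit : i < t := mem_range.mp hi
      have hj : t - 1 - i < t := by omega
      have hjr : ((t - 1 - i : ℕ) : ℝ) = (t : ℝ) - 1 - (i : ℝ) := by
        have : (t - 1 - i : ℕ) = t - 1 - i := rfl
        push_cast [Nat.cast_sub (by omega : i ≤ t - 1), Nat.cast_sub (by omega : 1 ≤ t)]
        ring
      have hb : (0 : ℝ) < (m : ℝ) - i := hden i hi
      have hd : (0 : ℝ) < (m : ℝ) - ((t : ℝ) - 1 - i) := by
        have := hden _ (mem_range.mpr hj); rwa [hjr] at this
      have ha : (0 : ℝ) < (n : ℝ) - i := hnum i hi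
      have hc : (0 : ℝ) < (n : ℝ) - ((t : ℝ) - 1 - i) := by
        have := hnum _ (mem_range.mpr hj); rwa [hjr] at this
      have hi0 : (0 : ℝ) ≤ (i : ℝ) := Nat.cast_nonneg i
      have hit' : (i : ℝ) ≤ (t : ℝ) - 1 := by
        have : (i : ℝ) + 1 ≤ (t : ℝ) := by exact_mod_cast hit
        linarith
      rw [hf]
      simp only [hjr]
      rw [div_pow, div_mul_div_comm, div_le_div_iff₀ (by positivity) (by positivity)]
      nlinarith [sq_nonneg ((i : ℝ) - ((t : ℝ) - 1 - i)),
        mul_nonneg (mul_nonneg (sq_nonneg ((i : ℝ) - ((t : ℝ) - 1 - i))) (by linarith : (0:ℝ) ≤ (n:ℝ) - (m:ℝ))) (by linarith : (0:ℝ) ≤ (n:ℝ) + (m:ℝ) - (i:ℝ) - ((t:ℝ) - 1 - i))]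
    have hprod : (r ^ 2) ^ t ≤ ∏ i ∈ range t, (f i * f (t - 1 - i)) := by
      calc (r ^ 2) ^ t = ∏ _i ∈ range t, r ^ 2 := by rw [prod_const, card_range]
        _ ≤ _ := prod_le_prod (fun i _ => sq_nonneg r) key
    have h2 : (r ^ t) ^ 2 ≤ (∏ i ∈ range t, f i) ^ 2 := by
      rw [← hsq] at hprod
      calc (r ^ t) ^ 2 = (r ^ 2) ^ t := by rw [← pow_mul, ← pow_mul, mul_comm]
        _ ≤ _ := hprod
    rw [hratio]
    calc r ^ t = Real.sqrt ((r ^ t) ^ 2) := (Real.sqrt_sq (pow_nonneg hrpos.le t)).symm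
      _ ≤ Real.sqrt ((∏ i ∈ range t, f i) ^ 2) := Real.sqrt_le_sqrt h2
      _ = ∏ i ∈ range t, f i := Real.sqrt_sq hPpos.le
  · -- upper bound
    set N : ℝ := (n : ℝ) * ((n : ℝ) - (t : ℝ) + 1) with hN
    set M : ℝ := (m : ℝ) * ((m : ℝ) - (t : ℝ) + 1) with hM
    have hMpos : 0 < M := by
      apply mul_pos (by linarith) (by linarith)
    have hNpos : 0 < N := by
      apply mul_pos (by linarith) (by linarith)
    have hMN : M ≤ N := by
      apply mul_le_mul hmnr (by linarith) (by linarith) (by linarith)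
    have key : ∀ i ∈ range t, f i * f (t - 1 - i) ≤ N / M := by
      intro i hi
      have hit : i < t := mem_range.mp hi
      have hj : t - 1 - i < t := by omega
      have hjr : ((t - 1 - i : ℕ) : ℝ) = (t : ℝ) - 1 - (i : ℝ) := by
        push_cast [Nat.cast_sub (by omega : i ≤ t - 1), Nat.cast_sub (by omega : 1 ≤ t)]
        ring
      have hb : (0 : ℝ) < (m : ℝ) - i := hden i hi
      have hd : (0 : ℝ) < (m : ℝ) - ((t : ℝ) - 1 - i) := by
        have := hden _ (mem_range.mpr hj); rwa [hjr] at this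
      have hi0 : (0 : ℝ) ≤ (i : ℝ) := Nat.cast_nonneg i
      have hit' : (i : ℝ) ≤ (t : ℝ) - 1 := by
        have : (i : ℝ) + 1 ≤ (t : ℝ) := by exact_mod_cast hit
        linarith
      rw [hf]
      simp only [hjr]
      rw [div_mul_div_comm, div_le_div_iff₀ (by positivity) hMpos]
      have hp : (0 : ℝ) ≤ (i : ℝ) * ((t : ℝ) - 1 - i) := mul_nonneg hi0 (by linarith)
      nlinarith [mul_nonneg hp (sub_nonneg.mpr hMN)]
    have hprod : ∏ i ∈ range t, (f i * f (t - 1 - i)) ≤ (N / M) ^ t := by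
      calc ∏ i ∈ range t, (f i * f (t - 1 - i))
          ≤ ∏ _i ∈ range t, N / M := by
            refine prod_le_prod (fun i hi => ?_) key
            exact mul_nonneg (hfpos i hi).le (le_of_lt (hfpos _ (mem_range.mpr (by
              have := mem_range.mp hi; omega))))
        _ = (N / M) ^ t := by rw [prod_const, card_range]
    have hP2 : (∏ i ∈ range t, f i) ^ 2 ≤ (N / M) ^ t := hsq ▸ hprod
    have hNM0 : (0 : ℝ) ≤ N / M := (div_pos hNpos hMpos).le
    have heq : ((n : ℝ) / (m : ℝ) * (((n : ℝ) - (t : ℝ) + 1) / ((m : ℝ) - (t : ℝ) + 1))) = N / M := by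
      rw [hN, hM, div_mul_div_comm]
    rw [hratio, heq]
    have hrw : (N / M) ^ ((t : ℝ) / 2) = Real.sqrt ((N / M) ^ t) := by
      rw [Real.sqrt_eq_rpow, ← Real.rpow_natCast (N / M) t, ← Real.rpow_mul hNM0]
      ring_nf
    rw [hrw]
    calc ∏ i ∈ range t, f i = Real.sqrt ((∏ i ∈ range t, f i) ^ 2) := by
          rw [Real.sqrt_sq hPpos.le]
      _ ≤ Real.sqrt ((N / M) ^ t) := Real.sqrt_le_sqrt hP2
end

section
/- For all positive integers ℓ, n, m, t with t ≤ m ≤ n, the minimum sizes of covering designs satisfy C(ℓn, ℓm, t) ≤ C(n, m, t). -/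
lemma coveringDesign_exists (n m t : ℕ) (htm : t ≤ m) (hmn : m ≤ n) :
    ∃ k : ℕ, ∃ S : Fin k → Finset (Fin n), IsCoveringDesign n m t k S := by
  classical
  set P : Finset (Finset (Fin n)) := Finset.univ.powersetCard m with hP
  have e : ↥P ≃ Fin P.card := Fintype.equivFinOfCardEq (Fintype.card_coe P)
  refine ⟨P.card, fun i => (e.symm i : Finset (Fin n)), ?_, ?_⟩
  · intro i
    exact (Finset.mem_powersetCard.mp (e.symm i).2).2
  · intro T hT
    obtain ⟨u, hTu, hu⟩ := Finset.exists_superset_card_eq (n := m) (s := T)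
      (le_trans hT htm) (by simpa using hmn)
    have hmem : u ∈ P :=
      Finset.mem_powersetCard.mpr ⟨Finset.subset_univ u, hu⟩
    exact ⟨e ⟨u, hmem⟩, by simpa using hTu⟩

/-- For positive integers `ℓ, n, m, t` with `t ≤ m ≤ n`: `C(ℓn, ℓm, t) ≤ C(n, m, t)`. -/
theorem coveringNumber_scale (ℓ n m t : ℕ) (hℓ : 1 ≤ ℓ) (ht : 1 ≤ t)
    (htm : t ≤ m) (hmn : m ≤ n) :
    coveringNumber (ℓ * n) (ℓ * m) t ≤ coveringNumber n m t := by
  classical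
  set B := {k : ℕ | ∃ S : Fin k → Finset (Fin n), IsCoveringDesign n m t k S} with hB
  have hBne : B.Nonempty := by
    obtain ⟨k, S, hS⟩ := coveringDesign_exists n m t htm hmn
    exact ⟨k, S, hS⟩
  have hmem : coveringNumber n m t ∈ B := Nat.sInf_mem hBne
  obtain ⟨S, hScard, hScov⟩ := hmem
  have hk : coveringNumber n m t = coveringNumber n m t := rfl
  let e : Fin ℓ × Fin n ≃ Fin (ℓ * n) := finProdFinEquiv
  let S' : Fin (coveringNumber n m t) → Finset (Fin (ℓ * n)) :=
    fun i => (Finset.univ ×ˢ S i).map e.toEmbedding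
  have : coveringNumber n m t ∈ {k : ℕ | ∃ S : Fin k → Finset (Fin (ℓ * n)),
      IsCoveringDesign (ℓ * n) (ℓ * m) t k S} := by
    refine ⟨S', ?_, ?_⟩
    · intro i
      simp only [S', Finset.card_map, Finset.card_product, Finset.card_univ,
        Fintype.card_fin, hScard i]
    · intro T hT
      set T' : Finset (Fin n) := T.image (fun x => (e.symm x).2) with hT'
      have hT'card : T'.card ≤ t := le_trans (Finset.card_image_le) hT
      obtain ⟨i, hi⟩ := hScov T' hT'card
      refine ⟨i, fun x hx => ?_⟩
      rw [Finset.mem_map]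
      refine ⟨e.symm x, ?_, e.apply_symm_apply x⟩
      rw [Finset.mem_product]
      exact ⟨Finset.mem_univ _, hi (Finset.mem_image_of_mem _ hx)⟩
  exact Nat.sInf_le this
end

section
/- Let n ≥ m ≥ t ≥ 0 be integers and let S_1,...,S_k be an (n,m,t)-covering design. Let Y be a finite nonempty set of real numbers, let f map partial tuples to Y, and define g(x') := max{ f(x'_{[n]∖S_i}) : i ∈ {1,...,k}, x'_j ≠ ⊥ for all j ∉ S_i }, with max ∅ := min Y. Then for every x with |x| = n (no null entries) and every x' ⊆ x with |x'| ≥ n − t: max{ f(x_{[n]∖S_i}) : i ∈ {1,...,k} } ≥ g(x) and g(x') ≥ min{ f(x_{[n]∖S_i}) : i ∈ {1,...,k} }. -/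
open scoped Classical

/-- `x' ⊆ x` for partial tuples: every coordinate of `x'` equals the corresponding
coordinate of `x` or is `⊥` (modelled by `none`). -/
def Subtuple {X : Type*} {n : ℕ} (x' x : Fin n → Option X) : Prop :=
  ∀ j, x' j = x j ∨ x' j = none

/-- `x_A`: the partial tuple agreeing with `x` on `A` and equal to `⊥` elsewhere. -/
def restrictTuple {X : Type*} {n : ℕ} (x : Fin n → Option X) (A : Finset (Fin n)) :
    Fin n → Option X :=
  fun j => if j ∈ A then x j else none

/-- `g(x') := max{ f(x'_{[n]∖S_i}) : i ∈ [k], x'_j ≠ ⊥ for all j ∉ S_i }`,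
with the convention `max ∅ := min Y`. -/
noncomputable def gmax {X : Type*} {n k : ℕ} (S : Fin k → Finset (Fin n))
    (f : (Fin n → Option X) → ℝ) (Y : Finset ℝ) (hY : Y.Nonempty)
    (x' : Fin n → Option X) : ℝ :=
  if h : (Finset.univ.filter fun i : Fin k => ∀ j ∉ S i, x' j ≠ none).Nonempty then
    (Finset.univ.filter fun i : Fin k => ∀ j ∉ S i, x' j ≠ none).sup' h
      (fun i => f (restrictTuple x' (S i)ᶜ))
  else Y.min' hY

/-- If `S_1,…,S_k` is an `(n,m,t)`-covering design, `x` has no null entries, and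
`x' ⊆ x` has at least `n − t` non-null entries, then
`max_i f(x_{[n]∖S_i}) ≥ g(x)` and `g(x') ≥ min_i f(x_{[n]∖S_i})`. -/
theorem gmax_accuracy {X : Type*} {n m t k : ℕ} (htm : t ≤ m) (hmn : m ≤ n)
    (S : Fin k → Finset (Fin n)) (hcard : ∀ i, (S i).card = m)
    (hcover : ∀ T : Finset (Fin n), T.card ≤ t → ∃ i, T ⊆ S i)
    (Y : Finset ℝ) (hY : Y.Nonempty)
    (f : (Fin n → Option X) → ℝ) (hf : ∀ z, f z ∈ Y)
    (x x' : Fin n → Option X) (hsub : Subtuple x' x)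
    (hx : (Finset.univ.filter fun j : Fin n => x j ≠ none).card = n)
    (hx' : n - t ≤ (Finset.univ.filter fun j : Fin n => x' j ≠ none).card) :
    gmax S f Y hY x ≤
        Finset.univ.sup' ⟨(hcover ∅ (Nat.zero_le t)).choose, Finset.mem_univ _⟩
          (fun i => f (restrictTuple x (S i)ᶜ)) ∧
      Finset.univ.inf' ⟨(hcover ∅ (Nat.zero_le t)).choose, Finset.mem_univ _⟩
          (fun i => f (restrictTuple x (S i)ᶜ)) ≤ gmax S f Y hY x' := by

  have hxall : ∀ j, x j ≠ none := by
    have he : (Finset.univ.filter fun j : Fin n => x j ≠ none) = Finset.univ :=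
      Finset.eq_univ_of_card _ (by simpa using hx)
    intro j
    have hj : j ∈ Finset.univ.filter fun j : Fin n => x j ≠ none := by
      rw [he]; exact Finset.mem_univ j
    simpa using hj
  constructor
  · rw [gmax]
    have hfil : (Finset.univ.filter fun i : Fin k => ∀ j ∉ S i, x j ≠ none)
        = Finset.univ := by
      apply Finset.eq_univ_iff_forall.2
      intro i
      simp only [Finset.mem_filter, Finset.mem_univ, true_and]
      exact fun j _ => hxall j
    rw [hfil, dif_pos ⟨(hcover ∅ (Nat.zero_le t)).choose, Finset.mem_univ _⟩]
  · set T := Finset.univ.filter fun j : Fin n => x' j = none with hTdef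
    have hTc : T = (Finset.univ.filter fun j : Fin n => x' j ≠ none)ᶜ := by
      ext j; simp [hTdef]
    have hcle : (Finset.univ.filter fun j : Fin n => x' j ≠ none).card ≤ n := by
      simpa using Finset.card_le_univ (Finset.univ.filter fun j : Fin n => x' j ≠ none)
    have hT : T.card ≤ t := by
      rw [hTc, Finset.card_compl]
      simp only [Fintype.card_fin]
      omega
    obtain ⟨i, hi⟩ := hcover T hT
    have hi' : ∀ j ∉ S i, x' j ≠ none := by
      intro j hj hnone
      exact hj (hi (by simp [hTdef, hnone]))
    have hne : (Finset.univ.filter fun i : Fin k => ∀ j ∉ S i, x' j ≠ none).Nonempty :=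
      ⟨i, by simpa using hi'⟩
    rw [gmax, dif_pos hne]
    have hx'eq : restrictTuple x' (S i)ᶜ = restrictTuple x (S i)ᶜ := by
      funext j
      unfold restrictTuple
      split
      · next h =>
        rcases hsub j with h1 | h2
        · exact h1
        · exact absurd h2 (hi' j (Finset.mem_compl.1 h))
      · rfl
    calc Finset.univ.inf' _ (fun i => f (restrictTuple x (S i)ᶜ))
        ≤ f (restrictTuple x (S i)ᶜ) := Finset.inf'_le _ (Finset.mem_univ i)
      _ = f (restrictTuple x' (S i)ᶜ) := by rw [hx'eq]
      _ ≤ _ := Finset.le_sup' (fun i => f (restrictTuple x' (S i)ᶜ))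
          (by simp only [Finset.mem_filter, Finset.mem_univ, true_and]; exact hi')
end

section
/- Let ℓ, n, m, t be integers with 0 ≤ t ≤ m ≤ n ≤ ℓ and n − t ≤ ℓ. Fix a subset x̃ of {1,...,ℓ²} with |x̃| = n, and let S be drawn uniformly at random from the family of subsets S ⊆ {1,...,ℓ²} with |S| = ℓ and |S ∩ x̃| = n − t (assumed nonempty). Fix a subset Y ⊆ {1,...,ℓ²} with |Y| = n − m and let j = |Y ∩ x̃|. Then Pr[Y ⊆ S] = (binom(n−j, t)/binom(n, t)) · (binom(ℓ²−n−(n−m)+j, ℓ²−ℓ−t)/binom(ℓ²−n, ℓ²−ℓ−t)). -/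
/-!
Cutting a set `s` into `s ∩ x̃` and `s \ x̃` identifies the family with a product of a layer of
subsets of `x̃` and a layer of subsets of its complement, and `Y ⊆ s` splits accordingly into
`Y ∩ x̃ ⊆ s ∩ x̃` and `Y \ x̃ ⊆ s \ x̃`. In each factor, complementing inside the ambient set turns
the `a`-subsets of `A` containing `w` into the `(|A| - a)`-subsets of `A \ w`. This counts both the
event (`w = Y`) and the whole family (`w = ∅`), and the probability is their ratio.
-/

open Finset

namespace Finset

variable {α : Type*} [DecidableEq α]

theorem card_powersetCard_filter_superset {A w : Finset α} {a : ℕ} (hw : w ⊆ A) (ha : a ≤ #A) :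
    #{u ∈ A.powersetCard a | w ⊆ u} = (#A - #w).choose (#A - a) := by
  rw [← card_sdiff_of_subset hw, ← card_powersetCard]
  refine card_nbij' (A \ ·) (A \ ·) ?_ ?_ ?_ ?_
  · intro u hu
    simp only [mem_coe, mem_filter, mem_powersetCard] at hu ⊢
    exact ⟨sdiff_subset_sdiff le_rfl hu.2, by rw [card_sdiff_of_subset hu.1.1, hu.1.2]⟩
  · intro v hv
    simp only [mem_coe, mem_filter, mem_powersetCard, subset_sdiff] at hv ⊢
    refine ⟨⟨sdiff_subset, ?_⟩, hw, hv.1.2.symm⟩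
    rw [card_sdiff_of_subset hv.1.1, hv.2]
    omega
  · intro u hu
    simp only [mem_coe, mem_filter, mem_powersetCard] at hu
    exact sdiff_sdiff_eq_self hu.1.1
  · intro v hv
    simp only [mem_coe, mem_powersetCard] at hv
    exact sdiff_sdiff_eq_self (hv.1.trans sdiff_subset)

theorem subset_iff_inter_subset_inter_and_sdiff_subset_sdiff {w s : Finset α} (A : Finset α) :
    w ⊆ s ↔ w ∩ A ⊆ s ∩ A ∧ w \ A ⊆ s \ A := by
  refine ⟨fun h ↦ ⟨inter_subset_inter h le_rfl, sdiff_subset_sdiff h le_rfl⟩, fun h ↦ ?_⟩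
  rw [← sdiff_union_inter w A]
  exact union_subset (h.2.trans sdiff_subset) (h.1.trans inter_subset_left)

theorem card_eq_and_card_inter_eq_iff {s A : Finset α} {k l : ℕ} (hkl : k ≤ l) :
    #s = l ∧ #(s ∩ A) = k ↔ #(s ∩ A) = k ∧ #(s \ A) = l - k := by
  have := card_inter_add_card_sdiff s A
  omega

variable [Fintype α]

theorem sdiff_subset_compl (s A : Finset α) : s \ A ⊆ Aᶜ := by
  rw [sdiff_eq_inter_compl]
  exact inter_subset_right

theorem union_inter_eq_left_of_subset_compl {A u v : Finset α} (hu : u ⊆ A) (hv : v ⊆ Aᶜ) :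
    (u ∪ v) ∩ A = u := by
  rw [union_inter_distrib_right, inter_eq_left.2 hu,
    disjoint_iff_inter_eq_empty.1 (subset_compl_iff_disjoint_right.1 hv), union_empty]

theorem union_sdiff_eq_right_of_subset_compl {A u v : Finset α} (hu : u ⊆ A) (hv : v ⊆ Aᶜ) :
    (u ∪ v) \ A = v := by
  rw [union_sdiff_distrib, sdiff_eq_empty_iff_subset.2 hu, empty_union,
    sdiff_eq_self_iff_disjoint.2 (subset_compl_iff_disjoint_right.1 hv)]

theorem card_filter_inter_and_sdiff (A : Finset α) (p q : Finset α → Prop) [DecidablePred p]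
    [DecidablePred q] :
    #{s | p (s ∩ A) ∧ q (s \ A)} = #{u ∈ A.powerset | p u} * #{v ∈ Aᶜ.powerset | q v} := by
  rw [← card_product]
  refine card_nbij' (fun s ↦ (s ∩ A, s \ A)) (fun uv ↦ uv.1 ∪ uv.2) ?_ ?_ ?_ ?_
  · intro s hs
    simp only [mem_coe, mem_filter, mem_univ, true_and] at hs
    simp only [mem_coe, mem_product, mem_filter, mem_powerset]
    exact ⟨⟨inter_subset_right, hs.1⟩, sdiff_subset_compl s A, hs.2⟩
  · rintro ⟨u, v⟩ huv
    simp only [mem_coe, mem_product, mem_filter, mem_powerset] at huv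
    simp only [mem_coe, mem_filter, mem_univ, true_and,
      union_inter_eq_left_of_subset_compl huv.1.1 huv.2.1,
      union_sdiff_eq_right_of_subset_compl huv.1.1 huv.2.1]
    exact ⟨huv.1.2, huv.2.2⟩
  · intro s _
    exact (union_comm _ _).trans (sdiff_union_inter s A)
  · rintro ⟨u, v⟩ huv
    simp only [mem_coe, mem_product, mem_filter, mem_powerset] at huv
    simp only [union_inter_eq_left_of_subset_compl huv.1.1 huv.2.1,
      union_sdiff_eq_right_of_subset_compl huv.1.1 huv.2.1]

theorem card_filter_card_inter_card_sdiff_superset (A w : Finset α) {a b : ℕ}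
    (ha : a ≤ #A) (hb : b ≤ #Aᶜ) :
    #{s | #(s ∩ A) = a ∧ #(s \ A) = b ∧ w ⊆ s} =
      (#A - #(w ∩ A)).choose (#A - a) * (#Aᶜ - #(w \ A)).choose (#Aᶜ - b) := by
  have hsplit : ∀ s : Finset α, (#(s ∩ A) = a ∧ #(s \ A) = b ∧ w ⊆ s) ↔
      (#(s ∩ A) = a ∧ w ∩ A ⊆ s ∩ A) ∧ (#(s \ A) = b ∧ w \ A ⊆ s \ A) := fun s ↦ by
    rw [subset_iff_inter_subset_inter_and_sdiff_subset_sdiff A]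
    tauto
  simp only [hsplit]
  rw [card_filter_inter_and_sdiff A (fun u ↦ #u = a ∧ w ∩ A ⊆ u) (fun v ↦ #v = b ∧ w \ A ⊆ v),
    ← filter_filter, ← filter_filter, ← powersetCard_eq_filter, ← powersetCard_eq_filter,
    card_powersetCard_filter_superset inter_subset_right ha,
    card_powersetCard_filter_superset (sdiff_subset_compl w A) hb]

end Finset

-- Truncated subtraction makes the two upper indices differ only when `ℓ ≤ 1`, where the lower one is `0`.
theorem Nat.choose_sq_sub_sub_sub_eq_choose_sq_sub_sub_add {ℓ n k j c : ℕ} (hn : n ≤ ℓ) (hk : k ≤ n)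
    (hj : j ≤ k) : (ℓ ^ 2 - n - (k - j)).choose (ℓ ^ 2 - ℓ - c) =
      (ℓ ^ 2 - n - k + j).choose (ℓ ^ 2 - ℓ - c) := by
  rcases le_or_gt 2 ℓ with hℓ | hℓ
  · have : 2 * ℓ ≤ ℓ ^ 2 := by nlinarith
    congr 1
    omega
  · have : ℓ ^ 2 - ℓ - c = 0 := by interval_cases ℓ <;> simp
    rw [this, Nat.choose_zero_right, Nat.choose_zero_right]

theorem ENNReal.natCast_mul_div_natCast_mul {a b c d : ℕ} (hbd : 0 < b * d) :
    ((a * c : ℕ) : ENNReal) / (b * d : ℕ) = ENNReal.ofReal (a / b * (c / d)) := by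
  rw [div_mul_div_comm, ← Nat.cast_mul, ← Nat.cast_mul,
    ENNReal.ofReal_div_of_pos (mod_cast hbd), ENNReal.ofReal_natCast, ENNReal.ofReal_natCast]

/-- Let `S` be uniform over the subsets of `{1,…,ℓ²}` of size `ℓ` whose intersection
with a fixed `n`-element set `x̃` has size `n − t`. For a fixed `(n−m)`-element set `Y`
with `j = |Y ∩ x̃|`,
`Pr[Y ⊆ S] = (binom(n−j,t)/binom(n,t)) ·
  (binom(ℓ²−n−(n−m)+j, ℓ²−ℓ−t)/binom(ℓ²−n, ℓ²−ℓ−t))`. -/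
theorem prob_contained (ℓ n m t : ℕ) (htm : t ≤ m) (hmn : m ≤ n) (hnℓ : n ≤ ℓ)
    (xt : Finset (Fin (ℓ ^ 2))) (hxt : xt.card = n)
    (F : Finset (Finset (Fin (ℓ ^ 2))))
    (hF : F = Finset.univ.filter fun s => s.card = ℓ ∧ (s ∩ xt).card = n - t)
    (hFne : F.Nonempty)
    (Y : Finset (Fin (ℓ ^ 2))) (hYcard : Y.card = n - m)
    (j : ℕ) (hj : j = (Y ∩ xt).card) :
    (PMF.uniformOfFinset F hFne).toOuterMeasure {s | Y ⊆ s} =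
      ENNReal.ofReal
        ((((n - j).choose t : ℝ) / (n.choose t : ℝ)) *
          (((ℓ ^ 2 - n - (n - m) + j).choose (ℓ ^ 2 - ℓ - t) : ℝ) /
            ((ℓ ^ 2 - n).choose (ℓ ^ 2 - ℓ - t) : ℝ))) := by
  have hxtc : #xtᶜ = ℓ ^ 2 - n := by rw [card_compl, hxt, Fintype.card_fin]
  have hjY : j ≤ n - m := by
    rw [hj, ← hYcard]
    exact card_le_card inter_subset_left
  have hYxt : #(Y \ xt) = n - m - j := by
    have := card_inter_add_card_sdiff Y xt
    omega
  have hfit : ℓ - (n - t) ≤ ℓ ^ 2 - n := by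
    obtain ⟨s, hs⟩ := hFne
    simp only [hF, mem_filter, mem_univ, true_and,
      card_eq_and_card_inter_eq_iff (by omega : n - t ≤ ℓ)] at hs
    rw [← hs.2, ← hxtc]
    exact card_le_card (sdiff_subset_compl s xt)
  have hcount : ∀ w : Finset (Fin (ℓ ^ 2)), #{s ∈ F | w ⊆ s} =
      (n - #(w ∩ xt)).choose t * (ℓ ^ 2 - n - #(w \ xt)).choose (ℓ ^ 2 - ℓ - t) := by
    intro w
    rw [hF, filter_filter]
    simp only [card_eq_and_card_inter_eq_iff (by omega : n - t ≤ ℓ), and_assoc]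
    rw [card_filter_card_inter_card_sdiff_superset xt w (by omega) (by omega), hxt, hxtc,
      show n - (n - t) = t by omega, show ℓ ^ 2 - n - (ℓ - (n - t)) = ℓ ^ 2 - ℓ - t by omega]
  have hnum : #{s ∈ F | Y ⊆ s} =
      (n - j).choose t * (ℓ ^ 2 - n - (n - m) + j).choose (ℓ ^ 2 - ℓ - t) := by
    rw [hcount, ← hj, hYxt,
      Nat.choose_sq_sub_sub_sub_eq_choose_sq_sub_sub_add hnℓ (Nat.sub_le n m) hjY]
  have hden : #F = n.choose t * (ℓ ^ 2 - n).choose (ℓ ^ 2 - ℓ - t) := by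
    simpa using hcount ∅
  have hden_pos : 0 < n.choose t * (ℓ ^ 2 - n).choose (ℓ ^ 2 - ℓ - t) :=
    Nat.mul_pos (Nat.choose_pos (by omega)) (Nat.choose_pos (by omega))
  rw [PMF.toOuterMeasure_uniformOfFinset_apply]
  simp only [Set.mem_ofPred_eq]
  rw [hnum, hden, ENNReal.natCast_mul_div_natCast_mul hden_pos]
end

section
/- Shifted inverse mechanism, pure DP: Let Y be a finite nonempty set of real numbers, let g be a function from finite multisets over a set X to Y that is monotone (x' ≤ x implies g(x') ≤ g(x)), and let ε, β > 0. Set t = 2·⌈(2/ε)·log(|Y|/β)⌉. Then there exists a randomized algorithm M mapping finite multisets over X to probability distributions on Y such that (i) M is (ε,0)-differentially private, and (ii) for every finite multiset x, with probability at least 1 − β over the randomness of M, g(x) ≥ M(x) ≥ min{ g(x') : x' ≤ x, |x'| ≥ |x| − t }. -/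
/-!
`M x` is the exponential mechanism on `{y ∈ Y | g 0 ≤ y}` with an integer penalty of sensitivity
one. Let `D y` (resp. `D⁻ y`) be the number of deletions from `x` needed to bring `g` to `≤ y`
(resp. `< y`), and `τ = t / 2`; the penalty of `y` is `max (D y - τ) (τ - D⁻ y)`. Adding an
element to `x` changes `D` and `D⁻` by at most one. The value `min {g z | z ≤ x, |z| ≥ |x| - τ}`
has penalty `≤ 0`, whereas an output above `g x` has `D⁻ = 0` and an output below the target
minimum over `2τ` deletions has `D > 2τ`, so both have penalty `≥ τ` and together carry
probability at most `|Y| e^{-ετ/2} ≤ β`.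
-/

open scoped Classical

open Multiset (card)

section MaxSubCard

variable {X : Type*}

-- `0` when no sub-multiset of `x` satisfies `p`
noncomputable def maxSubCard (p : Multiset X → Prop) (x : Multiset X) : ℕ :=
  Nat.findGreatest (fun n => ∃ z ≤ x, card z = n ∧ p z) (card x)

variable {p : Multiset X → Prop} {x z : Multiset X}

lemma card_le_maxSubCard (hz : z ≤ x) (hp : p z) : card z ≤ maxSubCard p x :=
  Nat.le_findGreatest (Multiset.card_le_card hz) ⟨z, hz, rfl, hp⟩

lemma exists_card_eq_maxSubCard (h : ∃ z ≤ x, p z) :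
    ∃ z ≤ x, card z = maxSubCard p x ∧ p z := by
  obtain ⟨z, hz, hp⟩ := h
  exact Nat.findGreatest_spec (P := fun n => ∃ z ≤ x, card z = n ∧ p z)
    (Multiset.card_le_card hz) ⟨z, hz, rfl, hp⟩

lemma maxSubCard_mono {x' : Multiset X} (h : x ≤ x') : maxSubCard p x ≤ maxSubCard p x' :=
  Nat.findGreatest_mono (fun _ ⟨z, hz, hcard, hp⟩ => ⟨z, hz.trans h, hcard, hp⟩)
    (Multiset.card_le_card h)

lemma maxSubCard_cons_le (hp : Antitone p) (a : X) :
    maxSubCard p (a ::ₘ x) ≤ maxSubCard p x + 1 := by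
  by_cases h : ∃ z ≤ a ::ₘ x, p z
  · obtain ⟨z, hz, hcard, hpz⟩ := exists_card_eq_maxSubCard h
    have herase := card_le_maxSubCard (Multiset.erase_le_iff_le_cons.2 hz)
      (hp (Multiset.erase_le a z) hpz)
    rw [Multiset.card_erase_eq_ite, Nat.pred_eq_sub_one] at herase
    split_ifs at herase <;> omega
  · push Not at h
    rw [maxSubCard, Nat.findGreatest_eq_zero_iff.2 fun n _ _ ⟨z, hz, _, hpz⟩ => h z hz hpz]
    omega

end MaxSubCard

lemma Multiset.exists_cons_of_card_sub_add_card_sub_eq_one {X : Type*} {x x' : Multiset X}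
    (h : card (x - x') + card (x' - x) = 1) :
    (∃ a, x' = a ::ₘ x) ∨ ∃ a, x = a ::ₘ x' := by
  have cons_of {x x' : Multiset X} (h0 : card (x - x') = 0) (h1 : card (x' - x) = 1) :
      ∃ a, x' = a ::ₘ x := by
    obtain ⟨a, ha⟩ := card_eq_one.1 h1
    refine ⟨a, ?_⟩
    rw [← singleton_add, ← ha, tsub_add_cancel_of_le (tsub_eq_zero_iff_le.1 (card_eq_zero.1 h0))]
  rcases Nat.add_eq_one_iff.1 h with ⟨h0, h1⟩ | ⟨h1, h0⟩
  · exact .inl (cons_of h0 h1)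
  · exact .inr (cons_of h0 h1)

section ExpMech

variable {α : Type*} (s : Finset α) (ε : ℝ)

-- The exponential mechanism, with `u` a penalty rather than a utility.
noncomputable def expMechProb (u : α → ℝ) (a : α) : ℝ :=
  Real.exp (-(ε / 2) * u a) / ∑ b ∈ s, Real.exp (-(ε / 2) * u b)

variable {s} (u : α → ℝ)

lemma expMechProb_nonneg (a : α) : 0 ≤ expMechProb s ε u a := by
  unfold expMechProb; positivity

lemma sum_expMechProb (hs : s.Nonempty) : ∑ a ∈ s, expMechProb s ε u a = 1 := by
  simp only [expMechProb]
  rw [← Finset.sum_div, div_self (Finset.sum_pos (fun _ _ => Real.exp_pos _) hs).ne']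

noncomputable def expMech (hs : s.Nonempty) : PMF α :=
  PMF.ofFinset (fun a => if a ∈ s then ENNReal.ofReal (expMechProb s ε u a) else 0) s
    (by
      rw [Finset.sum_congr rfl fun a ha => if_pos ha, ← ENNReal.ofReal_sum_of_nonneg
        fun a _ => expMechProb_nonneg ε u a, sum_expMechProb ε u hs, ENNReal.ofReal_one])
    fun _ ha => if_neg ha

lemma support_expMech_subset (hs : s.Nonempty) : (expMech ε u hs).support ⊆ s := by
  rw [expMech, PMF.support_ofFinset]
  exact Set.inter_subset_left

lemma expMech_toOuterMeasure (hs : s.Nonempty) (V : Set α) :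
    (expMech ε u hs).toOuterMeasure V
      = ENNReal.ofReal (∑ a ∈ s with a ∈ V, expMechProb s ε u a) := by
  rw [PMF.toOuterMeasure_apply, tsum_eq_sum (s := s.filter (· ∈ V)), ENNReal.ofReal_sum_of_nonneg
    fun a _ => expMechProb_nonneg ε u a]
  · refine Finset.sum_congr rfl fun a ha => ?_
    obtain ⟨has, haV⟩ := Finset.mem_filter.1 ha
    simp [expMech, haV, has]
  · intro a ha
    rw [Finset.mem_filter, not_and_or] at ha
    rcases ha with has | haV
    · simp [expMech, has]
    · exact Set.indicator_of_notMem haV _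

variable {ε} {u}

lemma exp_neg_half_mul_le (hε : 0 ≤ ε) {r r' : ℝ} (h : |r - r'| ≤ 1) :
    Real.exp (-(ε / 2) * r) ≤ Real.exp (ε / 2) * Real.exp (-(ε / 2) * r') := by
  rw [← Real.exp_add, Real.exp_le_exp]
  have := mul_le_mul_of_nonneg_left (abs_le.1 h).1 hε
  linarith

lemma expMechProb_le_exp_mul (hε : 0 ≤ ε) (hs : s.Nonempty) {u' : α → ℝ}
    (hu : ∀ a, |u a - u' a| ≤ 1) (a : α) :
    expMechProb s ε u a ≤ Real.exp ε * expMechProb s ε u' a := by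
  have hZ : Real.exp (-(ε / 2)) * ∑ b ∈ s, Real.exp (-(ε / 2) * u' b)
      ≤ ∑ b ∈ s, Real.exp (-(ε / 2) * u b) := by
    rw [Finset.mul_sum]
    refine Finset.sum_le_sum fun b _ => ?_
    rw [Real.exp_neg, ← div_eq_inv_mul, div_le_iff₀' (Real.exp_pos _)]
    exact exp_neg_half_mul_le hε (by rw [abs_sub_comm]; exact hu b)
  calc expMechProb s ε u a
      ≤ Real.exp (ε / 2) * Real.exp (-(ε / 2) * u' a)
          / (Real.exp (-(ε / 2)) * ∑ b ∈ s, Real.exp (-(ε / 2) * u' b)) :=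
        div_le_div₀ (by positivity) (exp_neg_half_mul_le hε (hu a))
          (by have := Finset.sum_pos (fun b _ => Real.exp_pos (-(ε / 2) * u' b)) hs; positivity) hZ
    _ = Real.exp ε * expMechProb s ε u' a := by
        rw [expMechProb, mul_div_mul_comm, ← Real.exp_sub]
        congr 2
        ring

theorem expMech_toOuterMeasure_le (hε : 0 ≤ ε) (hs : s.Nonempty) {u' : α → ℝ}
    (hu : ∀ a, |u a - u' a| ≤ 1) (V : Set α) :
    (expMech ε u hs).toOuterMeasure V
      ≤ ENNReal.ofReal (Real.exp ε) * (expMech ε u' hs).toOuterMeasure V := by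
  rw [expMech_toOuterMeasure, expMech_toOuterMeasure, ← ENNReal.ofReal_mul (Real.exp_pos _).le,
    Finset.mul_sum]
  exact ENNReal.ofReal_le_ofReal
    (Finset.sum_le_sum fun a _ => expMechProb_le_exp_mul hε hs hu a)

lemma expMechProb_le_exp (hε : 0 ≤ ε) {a₀ : α} (ha₀ : a₀ ∈ s) (hu₀ : u a₀ ≤ 0) {τ : ℝ} {a : α}
    (ha : τ ≤ u a) : expMechProb s ε u a ≤ Real.exp (-(ε / 2) * τ) := by
  have hZ : 1 ≤ ∑ b ∈ s, Real.exp (-(ε / 2) * u b) :=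
    (Real.one_le_exp (by nlinarith)).trans
      (Finset.single_le_sum (fun b _ => (Real.exp_pos _).le) ha₀)
  calc expMechProb s ε u a ≤ Real.exp (-(ε / 2) * u a) :=
        div_le_self (Real.exp_pos _).le hZ
    _ ≤ Real.exp (-(ε / 2) * τ) := Real.exp_le_exp.2 (by nlinarith)

theorem expMech_toOuterMeasure_ge (hε : 0 ≤ ε) (hs : s.Nonempty) {a₀ : α} (ha₀ : a₀ ∈ s)
    (hu₀ : u a₀ ≤ 0) {τ : ℝ} {G : Set α} (hG : ∀ a ∈ s, a ∉ G → τ ≤ u a) :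
    ENNReal.ofReal (1 - s.card * Real.exp (-(ε / 2) * τ))
      ≤ (expMech ε u hs).toOuterMeasure G := by
  rw [expMech_toOuterMeasure]
  refine ENNReal.ofReal_le_ofReal ?_
  have hbad : ∑ a ∈ s with a ∉ G, expMechProb s ε u a ≤ s.card * Real.exp (-(ε / 2) * τ) :=
    calc ∑ a ∈ s with a ∉ G, expMechProb s ε u a
        ≤ {a ∈ s | a ∉ G}.card • Real.exp (-(ε / 2) * τ) :=
          Finset.sum_le_card_nsmul _ _ _ fun a ha =>
            let ⟨has, haG⟩ := Finset.mem_filter.1 ha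
            expMechProb_le_exp hε ha₀ hu₀ (hG a has haG)
      _ ≤ s.card * Real.exp (-(ε / 2) * τ) := by
          rw [nsmul_eq_mul]
          gcongr
          exact Finset.filter_subset _ s
  linarith [Finset.sum_filter_add_sum_filter_not s (fun a => a ∈ G) (expMechProb s ε u),
    sum_expMechProb ε u hs]

end ExpMech

section ShiftedInverseScore

variable {X : Type*} (g : Multiset X → ℝ) (τ : ℤ)

-- `card x - maxSubCard (g · ≤ y) x` and `card x - maxSubCard (g · < y) x` are `D y` and `D⁻ y`;
-- for `y ≤ g 0` no sub-multiset has `g < y`, so `D⁻ y` is infinite and its term is dropped.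
noncomputable def shiftedInverseScore (x : Multiset X) (y : ℝ) : ℤ :=
  if g 0 < y then
    max (card x - τ - maxSubCard (g · ≤ y) x) (maxSubCard (g · < y) x - card x + τ)
  else card x - τ - maxSubCard (g · ≤ y) x

variable {g}

lemma abs_shiftedInverseScore_cons_sub_le (hg : Monotone g) (a : X) (x : Multiset X) (y : ℝ) :
    |shiftedInverseScore g τ (a ::ₘ x) y - shiftedInverseScore g τ x y| ≤ 1 := by
  have hle := Multiset.le_cons_self x a
  have h₁ := maxSubCard_mono (p := (g · ≤ y)) hle
  have h₂ := maxSubCard_cons_le (p := (g · ≤ y)) (x := x) (fun _ _ h hz => (hg h).trans hz) a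
  have h₃ := maxSubCard_mono (p := (g · < y)) hle
  have h₄ := maxSubCard_cons_le (p := (g · < y)) (x := x) (fun _ _ h hz => (hg h).trans_lt hz) a
  rw [abs_le]
  unfold shiftedInverseScore
  split_ifs <;> simp only [Multiset.card_cons] <;> omega

lemma abs_shiftedInverseScore_sub_le (hg : Monotone g) {x x' : Multiset X}
    (hxx' : card (x - x') + card (x' - x) = 1) (y : ℝ) :
    |(shiftedInverseScore g τ x y : ℝ) - shiftedInverseScore g τ x' y| ≤ 1 := by
  norm_cast
  rcases Multiset.exists_cons_of_card_sub_add_card_sub_eq_one hxx' with ⟨a, rfl⟩ | ⟨a, rfl⟩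
  · rw [abs_sub_comm]
    exact abs_shiftedInverseScore_cons_sub_le τ hg a x y
  · exact abs_shiftedInverseScore_cons_sub_le τ hg a x' y

lemma exists_shiftedInverseScore_nonpos (hτ : 0 ≤ τ) (x : Multiset X) :
    ∃ z ≤ x, shiftedInverseScore g τ x (g z) ≤ 0 := by
  obtain ⟨z, hz, hmin⟩ :=
    (x.powerset.toFinset.filter fun z => (card x : ℤ) - τ ≤ card z).exists_min_image g
      ⟨x, by simp [hτ]⟩
  simp only [Finset.mem_filter, Multiset.mem_toFinset, Multiset.mem_powerset] at hz hmin
  have hle : card z ≤ maxSubCard (g · ≤ g z) x := card_le_maxSubCard hz.1 le_rfl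
  refine ⟨z, hz.1, ?_⟩
  unfold shiftedInverseScore
  split_ifs with h0
  · obtain ⟨z', hz', hcard, hlt⟩ :=
      exists_card_eq_maxSubCard (p := (g · < g z)) ⟨0, Multiset.zero_le x, h0⟩
    have : ¬ (card x : ℤ) - τ ≤ card z' := fun h => (hmin z' ⟨hz', h⟩).not_gt hlt
    omega
  · omega

lemma le_shiftedInverseScore_of_lt (hg : Monotone g) {x : Multiset X} {y : ℝ} (hy : g x < y) :
    τ ≤ shiftedInverseScore g τ x y := by
  have h0 : g 0 < y := (hg (Multiset.zero_le x)).trans_lt hy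
  have := card_le_maxSubCard (p := (g · < y)) le_rfl hy
  rw [shiftedInverseScore, if_pos h0]
  omega

lemma le_shiftedInverseScore_of_lt_sInf (hg : Monotone g) {x : Multiset X} {y : ℝ}
    (hy₀ : g 0 ≤ y)
    (hy : y < sInf {r | ∃ z, z ≤ x ∧ (card x : ℤ) - 2 * τ ≤ card z ∧ g z = r}) :
    τ ≤ shiftedInverseScore g τ x y := by
  obtain ⟨z, hz, hcard, hzy⟩ :=
    exists_card_eq_maxSubCard (p := (g · ≤ y)) ⟨0, Multiset.zero_le x, hy₀⟩
  have hdel : ¬ (card x : ℤ) - 2 * τ ≤ card z := fun h =>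
    (hy.trans_le (csInf_le ⟨g 0, by rintro _ ⟨z, -, -, rfl⟩; exact hg (Multiset.zero_le z)⟩
      ⟨z, hz, h, rfl⟩)).not_ge hzy
  have : card x - τ - (maxSubCard (g · ≤ y) x : ℤ) ≤ shiftedInverseScore g τ x y := by
    unfold shiftedInverseScore
    split_ifs
    exacts [le_max_left _ _, le_rfl]
  omega

end ShiftedInverseScore

lemma card_mul_exp_neg_ceil_le {n : ℕ} (hn : 0 < n) {ε β : ℝ} (hε : 0 < ε) (hβ : 0 < β) :
    n * Real.exp (-(ε / 2) * ⌈2 / ε * Real.log (n / β)⌉) ≤ β := by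
  have hlog : Real.log (n / β) ≤ ε / 2 * ⌈2 / ε * Real.log (n / β)⌉ := by
    calc Real.log (n / β) = ε / 2 * (2 / ε * Real.log (n / β)) := by field_simp
      _ ≤ ε / 2 * ⌈2 / ε * Real.log (n / β)⌉ := by gcongr; exact Int.le_ceil _
  calc n * Real.exp (-(ε / 2) * ⌈2 / ε * Real.log (n / β)⌉)
      ≤ n * Real.exp (-Real.log (n / β)) := by gcongr; linarith
    _ = β := by
        rw [Real.exp_neg, Real.exp_log (by positivity)]
        field_simp

theorem shifted_inverse_pure_dp_general {X : Type*} (Y : Finset ℝ)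
    (g : Multiset X → ℝ) (hg : ∀ x, g x ∈ Y)
    (hmono : ∀ x' x : Multiset X, x' ≤ x → g x' ≤ g x)
    (ε β : ℝ) (hε : 0 < ε) (hβ : 0 < β)
    (t : ℤ) (ht : t = 2 * ⌈2 / ε * Real.log ((Y.card : ℝ) / β)⌉) :
    ∃ M : Multiset X → PMF ℝ,
      (∀ x : Multiset X, ∀ y ∈ (M x).support, y ∈ Y) ∧
      (∀ x x' : Multiset X,
        Multiset.card (x - x') + Multiset.card (x' - x) = 1 →
        ∀ V : Set ℝ,
          (M x).toOuterMeasure V ≤ ENNReal.ofReal (Real.exp ε) * (M x').toOuterMeasure V) ∧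
      (∀ x : Multiset X,
        ENNReal.ofReal (1 - β) ≤ (M x).toOuterMeasure
          {y : ℝ | y ≤ g x ∧
            sInf {r : ℝ | ∃ z, z ≤ x ∧
                (Multiset.card x : ℤ) - t ≤ (Multiset.card z : ℤ) ∧ g z = r} ≤ y}) := by
  have hg_mono : Monotone g := fun x' x h => hmono x' x h
  set τ := ⌈2 / ε * Real.log ((Y.card : ℝ) / β)⌉
  subst ht
  set Y' := Y.filter (g 0 ≤ ·)
  have hgY' (x : Multiset X) : g x ∈ Y' :=
    Finset.mem_filter.2 ⟨hg x, hg_mono (Multiset.zero_le x)⟩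
  have hY : 0 < Y.card := Finset.card_pos.2 ⟨g 0, hg 0⟩
  refine ⟨fun x => expMech ε (fun y => shiftedInverseScore g τ x y) ⟨g 0, hgY' 0⟩, ?_, ?_, ?_⟩
  · exact fun x y hy => (Finset.mem_filter.1 (support_expMech_subset _ _ _ hy)).1
  · exact fun x x' hxx' => expMech_toOuterMeasure_le hε.le _
      (abs_shiftedInverseScore_sub_le τ hg_mono hxx')
  intro x
  rcases le_or_gt 1 β with hβ1 | hβ1
  · simp [ENNReal.ofReal_eq_zero.2 (by linarith : 1 - β ≤ 0)]
  have hτ0 : 0 ≤ τ := Int.ceil_nonneg (mul_nonneg (by positivity)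
    (Real.log_nonneg ((one_le_div hβ).2 (hβ1.le.trans (by exact_mod_cast hY)))))
  obtain ⟨z, -, hz⟩ := exists_shiftedInverseScore_nonpos τ hτ0 x
  refine le_trans (ENNReal.ofReal_le_ofReal ?_) (expMech_toOuterMeasure_ge hε.le _ (hgY' z)
    (by exact_mod_cast hz) (τ := τ) fun y hy hyG => ?_)
  · have : (Y'.card : ℝ) ≤ Y.card := by exact_mod_cast Finset.card_filter_le _ _
    linarith [mul_le_mul_of_nonneg_right this (Real.exp_pos (-(ε / 2) * τ)).le,
      card_mul_exp_neg_ceil_le hY hε hβ]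
  simp only [Set.mem_ofPred_eq, not_and_or, not_le] at hyG
  rcases hyG with hy_gt | hy_lt
  · exact_mod_cast le_shiftedInverseScore_of_lt τ hg_mono hy_gt
  · exact_mod_cast le_shiftedInverseScore_of_lt_sInf τ hg_mono (Finset.mem_filter.1 hy).2 hy_lt

/-- Shifted inverse mechanism, pure DP: for a monotone function `g` taking values in a
finite nonempty set `Y ⊆ ℝ` and `t = 2·⌈(2/ε)·log(|Y|/β)⌉`, there is a randomized
algorithm `M` (a distribution on `Y` for each input multiset) that is
`(ε,0)`-differentially private and, on every input `x`, satisfies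
`g(x) ≥ M(x) ≥ min{ g(x') : x' ≤ x, |x'| ≥ |x| − t }` with probability at least `1 − β`. -/
theorem shifted_inverse_pure_dp {X : Type*} (Y : Finset ℝ) (hY : Y.Nonempty)
    (g : Multiset X → ℝ) (hg : ∀ x, g x ∈ Y)
    (hmono : ∀ x' x : Multiset X, x' ≤ x → g x' ≤ g x)
    (ε β : ℝ) (hε : 0 < ε) (hβ : 0 < β)
    (t : ℤ) (ht : t = 2 * ⌈2 / ε * Real.log ((Y.card : ℝ) / β)⌉) :
    ∃ M : Multiset X → PMF ℝ,
      (∀ x : Multiset X, ∀ y ∈ (M x).support, y ∈ Y) ∧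
      (∀ x x' : Multiset X,
        Multiset.card (x - x') + Multiset.card (x' - x) = 1 →
        ∀ V : Set ℝ,
          (M x).toOuterMeasure V ≤ ENNReal.ofReal (Real.exp ε) * (M x').toOuterMeasure V) ∧
      (∀ x : Multiset X,
        ENNReal.ofReal (1 - β) ≤ (M x).toOuterMeasure
          {y : ℝ | y ≤ g x ∧
            sInf {r : ℝ | ∃ z, z ≤ x ∧
                (Multiset.card x : ℤ) - t ≤ (Multiset.card z : ℤ) ∧ g z = r} ≤ y}) :=
  shifted_inverse_pure_dp_general Y g hg hmono ε β hε hβ t ht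
end

section
/- Main result, pure DP version: Let Y be a finite nonempty set of real numbers, let f map partial tuples over X to Y, let ε, β > 0, set t = 2·⌈(2/ε)·log(|Y|/β)⌉, let n ≥ m ≥ t be integers, and let S_1,...,S_k be an (n,m,t)-covering design. Then there exists a randomized algorithm M mapping partial tuples in (X ∪ {⊥})^n to probability distributions on Y such that (i) M is (ε,0)-differentially private with respect to neighbouring partial tuples (those differing in exactly one coordinate, where one of the two differing entries is ⊥), and (ii) for every input x with |x| = n (no null entries), with probability at least 1 − β over the randomness of M, max{ f(x_{[n]∖S_i}) : i ∈ {1,...,k} } ≥ M(x) ≥ min{ f(x_{[n]∖S_i}) : i ∈ {1,...,k} }. -/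
/-!
The mechanism is the exponential mechanism with score `min τ r(x, y)`, `τ = t / 2`, where
`r(x, y)` is the Hamming distance from `x` to the nearest dataset `w` for which `y` leaves the
interval `[min_i f(w_{[n]∖S_i}), max_i f(w_{[n]∖S_i})]`. The score moves by at most one between
neighbours, which gives ε-differential privacy, and a positive score certifies that `y` lies in
the interval for `x` itself. Two datasets within distance `τ` of `x` differ in at most `t`
coordinates, which the covering design puts inside one block `S_i`; so they agree off `S_i` and
their intervals meet. By one-dimensional Helly all these intervals share a point of `Y`, whose
score is `τ`, and a bad output has probability at most `|Y| e^{-ετ/2} ≤ β`.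
-/

open scoped Classical

open Finset Real

section Gibbs

variable {α : Type*} (Y : Finset α)

noncomputable def gibbsDensity (u : α → ℝ) (y : α) : ℝ :=
  if y ∈ Y then exp (u y) / ∑ z ∈ Y, exp (u z) else 0

variable {Y}

lemma gibbsDensity_nonneg (u : α → ℝ) (y : α) : 0 ≤ gibbsDensity Y u y := by
  unfold gibbsDensity
  split_ifs <;> positivity

lemma sum_gibbsDensity (hY : Y.Nonempty) (u : α → ℝ) : ∑ y ∈ Y, gibbsDensity Y u y = 1 := by
  have hZ : 0 < ∑ z ∈ Y, exp (u z) := sum_pos (fun z _ => exp_pos (u z)) hY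
  calc ∑ y ∈ Y, gibbsDensity Y u y = ∑ y ∈ Y, exp (u y) / ∑ z ∈ Y, exp (u z) :=
        sum_congr rfl fun y hy => if_pos hy
    _ = 1 := by rw [← sum_div, div_self hZ.ne']

lemma gibbsDensity_le_exp_mul {u u' : α → ℝ} {c : ℝ} (h : ∀ y ∈ Y, |u y - u' y| ≤ c) (y : α) :
    gibbsDensity Y u y ≤ exp (2 * c) * gibbsDensity Y u' y := by
  unfold gibbsDensity
  split_ifs with hy
  · have hexp : ∀ z ∈ Y, exp (u z) ≤ exp c * exp (u' z) ∧ exp (u' z) ≤ exp c * exp (u z) :=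
      fun z hz => by
        rw [← exp_add, ← exp_add, exp_le_exp, exp_le_exp]
        exact ⟨by linarith [le_abs_self (u z - u' z), h z hz],
          by linarith [neg_abs_le (u z - u' z), h z hz]⟩
    have hZ' : ∑ z ∈ Y, exp (u' z) ≤ exp c * ∑ z ∈ Y, exp (u z) := by
      rw [mul_sum]; exact sum_le_sum fun z hz => (hexp z hz).2
    have hZ : 0 < ∑ z ∈ Y, exp (u z) := sum_pos (fun z _ => exp_pos (u z)) ⟨y, hy⟩
    have hZ'pos : 0 < ∑ z ∈ Y, exp (u' z) := sum_pos (fun z _ => exp_pos (u' z)) ⟨y, hy⟩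
    rw [mul_div_assoc', div_le_div_iff₀ hZ hZ'pos, two_mul, exp_add]
    calc exp (u y) * ∑ z ∈ Y, exp (u' z)
        ≤ (exp c * exp (u' y)) * (exp c * ∑ z ∈ Y, exp (u z)) :=
          mul_le_mul (hexp y hy).1 hZ' hZ'pos.le (by positivity)
      _ = exp c * exp c * exp (u' y) * ∑ z ∈ Y, exp (u z) := by ring
  · simp

lemma one_sub_le_sum_gibbsDensity_filter (hY : Y.Nonempty) {u : α → ℝ} {a b β : ℝ}
    {P : α → Prop} [DecidablePred P] {y₀ : α} (hy₀ : y₀ ∈ Y) (ha : a ≤ u y₀)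
    (hb : ∀ y ∈ Y, ¬ P y → u y ≤ b) (hβ : #Y * exp (b - a) ≤ β) :
    1 - β ≤ ∑ y ∈ Y with P y, gibbsDensity Y u y := by
  have hZ : exp a ≤ ∑ z ∈ Y, exp (u z) :=
    (exp_le_exp.mpr ha).trans (single_le_sum (fun z _ => (exp_pos (u z)).le) hy₀)
  have hbad : ∀ y ∈ {y ∈ Y | ¬ P y}, gibbsDensity Y u y ≤ exp (b - a) := by
    intro y hy
    obtain ⟨hyY, hyP⟩ := mem_filter.mp hy
    rw [gibbsDensity, if_pos hyY, exp_sub]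
    exact div_le_div₀ (exp_pos b).le (exp_le_exp.mpr (hb y hyY hyP)) (exp_pos a) hZ
  have hbad_sum : ∑ y ∈ Y with ¬ P y, gibbsDensity Y u y ≤ β :=
    calc ∑ y ∈ Y with ¬ P y, gibbsDensity Y u y ≤ #{y ∈ Y | ¬ P y} * exp (b - a) := by
          simpa only [nsmul_eq_mul] using sum_le_card_nsmul _ _ _ hbad
      _ ≤ #Y * exp (b - a) := by gcongr; exact filter_subset _ Y
      _ ≤ β := hβ
  linarith [sum_filter_add_sum_filter_not Y P (gibbsDensity Y u), sum_gibbsDensity hY u]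

noncomputable def gibbs (hY : Y.Nonempty) (u : α → ℝ) : PMF α :=
  PMF.ofFinset (fun y => ENNReal.ofReal (gibbsDensity Y u y)) Y
    (by rw [← ENNReal.ofReal_sum_of_nonneg fun y _ => gibbsDensity_nonneg u y,
      sum_gibbsDensity hY, ENNReal.ofReal_one])
    (fun y hy => by simp [gibbsDensity, hy])

lemma support_gibbs_subset (hY : Y.Nonempty) (u : α → ℝ) : (gibbs hY u).support ⊆ Y := by
  intro y hy
  by_contra hyY
  exact hy (PMF.ofFinset_apply_of_notMem _ _ hyY)

lemma gibbs_toOuterMeasure_ge (hY : Y.Nonempty) (u : α → ℝ) (G : Set α) :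
    ENNReal.ofReal (∑ y ∈ Y with y ∈ G, gibbsDensity Y u y) ≤ (gibbs hY u).toOuterMeasure G := by
  rw [ENNReal.ofReal_sum_of_nonneg fun y _ => gibbsDensity_nonneg u y]
  calc ∑ y ∈ Y with y ∈ G, ENNReal.ofReal (gibbsDensity Y u y)
      = (gibbs hY u).toOuterMeasure ↑({y ∈ Y | y ∈ G}) :=
        ((gibbs hY u).toOuterMeasure_apply_finset _).symm
    _ ≤ (gibbs hY u).toOuterMeasure G :=
      (gibbs hY u).toOuterMeasure.mono fun y hy => (mem_filter.mp hy).2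

end Gibbs

lemma PMF.toOuterMeasure_le_mul_of_le {α : Type*} {p q : PMF α} {C : ENNReal}
    (h : ∀ a, p a ≤ C * q a) (V : Set α) : p.toOuterMeasure V ≤ C * q.toOuterMeasure V := by
  simp only [PMF.toOuterMeasure_apply, ← ENNReal.tsum_mul_left]
  exact ENNReal.tsum_le_tsum fun a => by by_cases ha : a ∈ V <;> simp [ha, h a]

theorem exists_dp_mechanism_of_score {A α : Type*} (Y : Finset α) (hY : Y.Nonempty)
    {ε β τ : ℝ} (hε : 0 ≤ ε) (Adj : A → A → Prop) (s : A → α → ℝ)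
    (hs : ∀ x x', Adj x x' → ∀ y, |s x y - s x' y| ≤ 1)
    (G : A → Set α) (hG : ∀ x, ∀ y ∈ Y, y ∉ G x → s x y ≤ 0)
    (hτ : ∀ x, ∃ y ∈ Y, τ ≤ s x y) (hβ : #Y * exp (-(ε / 2 * τ)) ≤ β) :
    ∃ M : A → PMF α, (∀ x, ∀ y ∈ (M x).support, y ∈ Y) ∧
      (∀ x x', Adj x x' → ∀ V : Set α,
        (M x).toOuterMeasure V ≤ ENNReal.ofReal (exp ε) * (M x').toOuterMeasure V) ∧
      ∀ x, ENNReal.ofReal (1 - β) ≤ (M x).toOuterMeasure (G x) := by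
  refine ⟨fun x => gibbs hY fun y => ε / 2 * s x y, fun x => support_gibbs_subset hY _, ?_, ?_⟩
  · intro x x' hxx' V
    refine PMF.toOuterMeasure_le_mul_of_le (fun y => ?_) V
    have hu : ∀ y ∈ Y, |ε / 2 * s x y - ε / 2 * s x' y| ≤ ε / 2 := fun y _ => by
      rw [← mul_sub, abs_mul, abs_of_nonneg (by positivity)]
      exact mul_le_of_le_one_right (by positivity) (hs x x' hxx' y)
    have := gibbsDensity_le_exp_mul hu y
    rw [mul_div_cancel₀ ε two_ne_zero] at this
    exact (ENNReal.ofReal_le_ofReal this).trans_eq (ENNReal.ofReal_mul (exp_pos ε).le)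
  · intro x
    obtain ⟨y₀, hy₀, hτy₀⟩ := hτ x
    refine (ENNReal.ofReal_le_ofReal ?_).trans (gibbs_toOuterMeasure_ge hY _ (G x))
    refine one_sub_le_sum_gibbsDensity_filter hY hy₀ (b := 0)
      (mul_le_mul_of_nonneg_left hτy₀ (by positivity)) (fun y hy hyG => ?_) (by rwa [zero_sub])
    exact mul_nonpos_of_nonneg_of_nonpos (by positivity) (hG x y hy hyG)

lemma card_filter_range_le_card_filter_range_add_one {τ : ℕ} {P Q : ℕ → Prop}
    (h : ∀ d, P (d + 1) → Q d) : #{d ∈ range τ | P d} ≤ #{d ∈ range τ | Q d} + 1 :=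
  calc #{d ∈ range τ | P d} ≤ #{d ∈ range (τ + 1) | P d} :=
        card_le_card (filter_subset_filter _ (range_subset_range.mpr τ.le_succ))
    _ = #{d ∈ range τ | P (d + 1)} + if P 0 then 1 else 0 := by
        simp only [card_filter, sum_range_succ']
    _ ≤ #{d ∈ range τ | Q d} + 1 :=
        add_le_add (card_le_card (monotone_filter_right _ fun d _ => h d)) (by split_ifs <;> simp)

section StabilityScore

variable {ι : Type*} [Fintype ι] {β : ι → Type*} [∀ i, DecidableEq (β i)] {γ : Type*}
  (G : (∀ i, β i) → Set γ) (τ : ℕ)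

/-- `min τ r`, where `r` is the Hamming distance from `x` to the nearest `w` with `y ∉ G w`. -/
noncomputable def stabilityScore (x : ∀ i, β i) (y : γ) : ℕ :=
  #{d ∈ range τ | ∀ w, hammingDist x w ≤ d → y ∈ G w}

variable {G τ}

lemma stabilityScore_le_add_one {x x' : ∀ i, β i} (h : hammingDist x x' ≤ 1) (y : γ) :
    stabilityScore G τ x y ≤ stabilityScore G τ x' y + 1 :=
  card_filter_range_le_card_filter_range_add_one fun d hd w hw =>
    hd w ((hammingDist_triangle x x' w).trans (by omega))

lemma abs_sub_stabilityScore_le_one {x x' : ∀ i, β i} (h : hammingDist x x' ≤ 1) (y : γ) :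
    |(stabilityScore G τ x y : ℝ) - stabilityScore G τ x' y| ≤ 1 := by
  have h₁ : (stabilityScore G τ x y : ℝ) ≤ stabilityScore G τ x' y + 1 := by
    exact_mod_cast stabilityScore_le_add_one h y
  have h₂ : (stabilityScore G τ x' y : ℝ) ≤ stabilityScore G τ x y + 1 := by
    exact_mod_cast stabilityScore_le_add_one (hammingDist_comm x x' ▸ h) y
  exact abs_sub_le_iff.mpr ⟨by linarith, by linarith⟩

lemma stabilityScore_eq_zero {x : ∀ i, β i} {y : γ} (h : y ∉ G x) :
    stabilityScore G τ x y = 0 :=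
  card_eq_zero.mpr (filter_false_of_mem fun _ _ hd => h (hd x (by simp)))

lemma stabilityScore_eq {x : ∀ i, β i} {y : γ} (h : ∀ w, hammingDist x w ≤ τ → y ∈ G w) :
    stabilityScore G τ x y = τ := by
  rw [stabilityScore, filter_true_of_mem fun d hd w hw => h w (hw.trans (mem_range.mp hd).le),
    card_range]

end StabilityScore

/-- One-dimensional Helly: the least right endpoint is a common point. -/
lemma exists_forall_le_sup'_and_inf'_le {B κ α : Type*} [LinearOrder α] (Y : Finset α)
    (s : Finset κ) (hs : s.Nonempty) (F : B → κ → α) (hF : ∀ b, ∀ i ∈ s, F b i ∈ Y) (b₀ : B)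
    (h : ∀ b b', ∃ i ∈ s, F b i = F b' i) :
    ∃ y ∈ Y, ∀ b, y ≤ s.sup' hs (F b) ∧ s.inf' hs (F b) ≤ y := by
  have hsup : ∀ b, s.sup' hs (F b) ∈ Y := fun b => by
    obtain ⟨i, hi, hsup⟩ := exists_mem_eq_sup' hs (F b)
    exact hsup ▸ hF b i hi
  let H := {y ∈ Y | ∃ b, s.sup' hs (F b) = y}
  have hH : H.Nonempty := ⟨_, mem_filter.mpr ⟨hsup b₀, b₀, rfl⟩⟩
  obtain ⟨hminY, b₁, hb₁⟩ := mem_filter.mp (H.min'_mem hH)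
  refine ⟨H.min' hH, hminY, fun b => ⟨H.min'_le _ (mem_filter.mpr ⟨hsup b, b, rfl⟩), ?_⟩⟩
  obtain ⟨i, hi, hFi⟩ := h b b₁
  calc s.inf' hs (F b) ≤ F b i := inf'_le _ hi
    _ = F b₁ i := hFi
    _ ≤ s.sup' hs (F b₁) := le_sup' _ hi
    _ = H.min' hH := hb₁

lemma restrictTuple_compl_eq {X : Type*} {n : ℕ} {w w' : Fin n → Option X} {A : Finset (Fin n)}
    (h : ∀ j ∉ A, w j = w' j) : restrictTuple w Aᶜ = restrictTuple w' Aᶜ := by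
  funext j
  by_cases hj : j ∈ A <;> simp [restrictTuple, hj, h]

lemma exists_restrictTuple_compl_eq_of_hammingDist_le {X : Type*} {n k t : ℕ}
    {S : Fin k → Finset (Fin n)} (hcover : ∀ T : Finset (Fin n), #T ≤ t → ∃ i, T ⊆ S i)
    {w w' : Fin n → Option X} (h : hammingDist w w' ≤ t) :
    ∃ i, restrictTuple w (S i)ᶜ = restrictTuple w' (S i)ᶜ := by
  obtain ⟨i, hi⟩ := hcover {j | w j ≠ w' j} h
  refine ⟨i, restrictTuple_compl_eq fun j hj => ?_⟩
  by_contra hne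
  exact hj (hi (mem_filter.mpr ⟨mem_univ j, hne⟩))

lemma hammingDist_le_one_of_forall_ne {ι : Type*} [Fintype ι] {β : ι → Type*}
    [∀ i, DecidableEq (β i)] {x x' : ∀ i, β i} (j : ι) (h : ∀ i, i ≠ j → x i = x' i) :
    hammingDist x x' ≤ 1 := by
  refine (card_le_card (t := {j}) fun i hi => ?_).trans (card_singleton j).le
  exact mem_singleton.mpr (by_contra fun hij => (mem_filter.mp hi).2 (h i hij))

noncomputable def blockComplRange {X : Type*} {n k : ℕ} (f : (Fin n → Option X) → ℝ)
    (S : Fin k → Finset (Fin n)) (hk : (univ : Finset (Fin k)).Nonempty)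
    (x : Fin n → Option X) : Set ℝ :=
  {y | y ≤ univ.sup' hk (fun i => f (restrictTuple x (S i)ᶜ)) ∧
    univ.inf' hk (fun i => f (restrictTuple x (S i)ᶜ)) ≤ y}

lemma exists_mem_forall_hammingDist_le_mem_blockComplRange {X : Type*} {n k τ : ℕ}
    {Y : Finset ℝ} {f : (Fin n → Option X) → ℝ} (hf : ∀ z, f z ∈ Y)
    {S : Fin k → Finset (Fin n)} (hk : (univ : Finset (Fin k)).Nonempty)
    (hcover : ∀ T : Finset (Fin n), #T ≤ 2 * τ → ∃ i, T ⊆ S i) (x : Fin n → Option X) :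
    ∃ y ∈ Y, ∀ w, hammingDist x w ≤ τ → y ∈ blockComplRange f S hk w := by
  obtain ⟨y, hy, hyw⟩ := exists_forall_le_sup'_and_inf'_le Y univ hk
    (fun (w : {w // hammingDist x w ≤ τ}) i => f (restrictTuple w.1 (S i)ᶜ))
    (fun _ _ _ => hf _) ⟨x, by simp⟩ fun w w' => by
      obtain ⟨i, hi⟩ := exists_restrictTuple_compl_eq_of_hammingDist_le hcover (w := w.1)
        (w' := w'.1) (by linarith [hammingDist_triangle_left w.1 w'.1 x, w.2, w'.2])
      exact ⟨i, mem_univ i, by simp only [hi]⟩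
  exact ⟨y, hy, fun w hw => hyw ⟨w, hw⟩⟩

lemma mul_exp_neg_le_of_log_div_le {N ε β τ : ℝ} (hN : 0 < N) (hε : 0 < ε) (hβ : 0 < β)
    (hτ : 2 / ε * log (N / β) ≤ τ) : N * exp (-(ε / 2 * τ)) ≤ β := by
  have hlog : log (N / β) ≤ ε / 2 * τ := by
    have := mul_le_mul_of_nonneg_left hτ (by positivity : 0 ≤ ε / 2)
    rwa [← mul_assoc, div_mul_div_comm, mul_comm ε 2, div_self (by positivity), one_mul] at this
  calc N * exp (-(ε / 2 * τ)) ≤ N * exp (-log (N / β)) := by gcongr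
    _ = β := by rw [exp_neg, exp_log (by positivity), inv_div]; field_simp

theorem main_result_pure_dp_general {X : Type*} (Y : Finset ℝ) (hY : Y.Nonempty)
    {n t k : ℕ}
    (f : (Fin n → Option X) → ℝ) (hf : ∀ z, f z ∈ Y)
    (ε β : ℝ) (hε : 0 < ε) (hβ : 0 < β)
    (ht : (t : ℤ) = 2 * ⌈2 / ε * Real.log ((Y.card : ℝ) / β)⌉)
    (S : Fin k → Finset (Fin n))
    (hcover : ∀ T : Finset (Fin n), T.card ≤ t → ∃ i, T ⊆ S i) :
    ∃ M : (Fin n → Option X) → PMF ℝ,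
      (∀ x : Fin n → Option X, ∀ y ∈ (M x).support, y ∈ Y) ∧
      (∀ x x' : Fin n → Option X,
        (∃ j : Fin n, x j ≠ x' j ∧ (x j = none ∨ x' j = none) ∧
          ∀ j' : Fin n, j' ≠ j → x j' = x' j') →
        ∀ V : Set ℝ,
          (M x).toOuterMeasure V ≤ ENNReal.ofReal (Real.exp ε) * (M x').toOuterMeasure V) ∧
      (∀ x : Fin n → Option X, (∀ j, x j ≠ none) →
        ENNReal.ofReal (1 - β) ≤ (M x).toOuterMeasure
          {y : ℝ |
            y ≤ Finset.univ.sup' ⟨(hcover ∅ (Nat.zero_le t)).choose, Finset.mem_univ _⟩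
                (fun i => f (restrictTuple x (S i)ᶜ)) ∧
            Finset.univ.inf' ⟨(hcover ∅ (Nat.zero_le t)).choose, Finset.mem_univ _⟩
                (fun i => f (restrictTuple x (S i)ᶜ)) ≤ y}) := by
  have hk : (univ : Finset (Fin k)).Nonempty := ⟨(hcover ∅ (Nat.zero_le t)).choose, mem_univ _⟩
  set τ := ⌈2 / ε * log (#Y / β)⌉.toNat
  have hτ : 2 / ε * log (#Y / β) ≤ τ :=
    (Int.le_ceil _).trans (by exact_mod_cast Int.self_le_toNat _)
  have htτ : t = 2 * τ := by omega
  let G := blockComplRange f S hk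
  obtain ⟨M, hsupp, hdp, hacc⟩ := exists_dp_mechanism_of_score Y hY hε.le
    (fun x x' => hammingDist x x' ≤ 1) (fun x y => (stabilityScore G τ x y : ℝ))
    (fun x x' h y => abs_sub_stabilityScore_le_one h y) G
    (fun x y _ hyG => (Nat.cast_eq_zero.mpr (stabilityScore_eq_zero hyG)).le)
    (fun x => by
      obtain ⟨y, hy, hyG⟩ := exists_mem_forall_hammingDist_le_mem_blockComplRange hf hk
        (htτ ▸ hcover) x
      exact ⟨y, hy, (congrArg Nat.cast (stabilityScore_eq hyG)).ge⟩)
    (mul_exp_neg_le_of_log_div_le (by exact_mod_cast hY.card_pos) hε hβ hτ)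
  exact ⟨M, hsupp, fun x x' ⟨j, _, _, hj⟩ => hdp x x' (hammingDist_le_one_of_forall_ne j hj),
    fun x _ => hacc x⟩

/-- Main result, pure DP version: given a function `f` on partial tuples taking values
in a finite nonempty `Y ⊆ ℝ`, `t = 2·⌈(2/ε)·log(|Y|/β)⌉`, integers `n ≥ m ≥ t`, and an
`(n,m,t)`-covering design `S_1,…,S_k`, there is a randomized algorithm `M` that is
`(ε,0)`-differentially private with respect to neighbouring partial tuples (differing in
exactly one coordinate, one of the two differing entries being `⊥`), and for every
input `x` with no null entries, with probability at least `1 − β`,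
`max_i f(x_{[n]∖S_i}) ≥ M(x) ≥ min_i f(x_{[n]∖S_i})`. -/
theorem main_result_pure_dp {X : Type*} (Y : Finset ℝ) (hY : Y.Nonempty)
    {n m t k : ℕ}
    (f : (Fin n → Option X) → ℝ) (hf : ∀ z, f z ∈ Y)
    (ε β : ℝ) (hε : 0 < ε) (hβ : 0 < β)
    (ht : (t : ℤ) = 2 * ⌈2 / ε * Real.log ((Y.card : ℝ) / β)⌉)
    (htm : t ≤ m) (hmn : m ≤ n)
    (S : Fin k → Finset (Fin n)) (hcard : ∀ i, (S i).card = m)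
    (hcover : ∀ T : Finset (Fin n), T.card ≤ t → ∃ i, T ⊆ S i) :
    ∃ M : (Fin n → Option X) → PMF ℝ,
      (∀ x : Fin n → Option X, ∀ y ∈ (M x).support, y ∈ Y) ∧
      (∀ x x' : Fin n → Option X,
        (∃ j : Fin n, x j ≠ x' j ∧ (x j = none ∨ x' j = none) ∧
          ∀ j' : Fin n, j' ≠ j → x j' = x' j') →
        ∀ V : Set ℝ,
          (M x).toOuterMeasure V ≤ ENNReal.ofReal (Real.exp ε) * (M x').toOuterMeasure V) ∧
      (∀ x : Fin n → Option X, (∀ j, x j ≠ none) →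
        ENNReal.ofReal (1 - β) ≤ (M x).toOuterMeasure
          {y : ℝ |
            y ≤ Finset.univ.sup' ⟨(hcover ∅ (Nat.zero_le t)).choose, Finset.mem_univ _⟩
                (fun i => f (restrictTuple x (S i)ᶜ)) ∧
            Finset.univ.inf' ⟨(hcover ∅ (Nat.zero_le t)).choose, Finset.mem_univ _⟩
                (fun i => f (restrictTuple x (S i)ᶜ)) ≤ y}) :=
  main_result_pure_dp_general Y hY f hf ε β hε hβ ht S hcover
end
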